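/- arXiv:2303.14671 — 2 statements merged into one kernel-verified Lean document; each statement's English description precedes it below -/
import Mathlib

section
/- Let G be a finite median graph, H a convex subgraph of G, and θ1, θ2 two crossing Θ-classes of G. If both θ1 and θ2 occur in H (i.e., each contains an edge of H), then θ1 and θ2 cross in H, i.e., H contains a θ1,θ2-alternating 4-cycle. -/
open SimpleGraph Polynomial

/-- The hypercube `Q_n`: vertices are functions `Fin n → Bool`, two vertices adjacent
iff they differ in exactly one coordinate. -/
def hypercube (n : ℕ) : SimpleGraph (Fin n → Bool) where
  Adj x y := ∃! i, x i ≠ y i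
  symm := by
    refine ⟨?_⟩
    rintro x y ⟨i, hi, hu⟩
    exact ⟨i, hi.symm, fun j hj => hu j hj.symm⟩
  loopless := by
    refine ⟨?_⟩
    rintro x ⟨i, hi, -⟩
    exact hi rfl

/-- `f` is an isometric embedding of `G` into `H` (distances are preserved); its image is
an isometric subgraph of `H`. -/
def IsIsometricEmbedding {V W : Type*} (G : SimpleGraph V) (H : SimpleGraph W)
    (f : V → W) : Prop :=
  Function.Injective f ∧ ∀ u v : V, H.dist (f u) (f v) = G.dist u v

/-- A partial cube: a connected graph isomorphic to an isometric subgraph of some hypercube. -/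
def IsPartialCube {V : Type*} (G : SimpleGraph V) : Prop :=
  G.Connected ∧ ∃ (n : ℕ) (f : V → (Fin n → Bool)), IsIsometricEmbedding G (hypercube n) f

/-- The Djoković–Winkler relation on (unordered) edges: `e = uv` and `f = xy` are related iff
`d(u,x) + d(v,y) ≠ d(u,y) + d(v,x)`. -/
def DWRel {V : Type*} (G : SimpleGraph V) (e f : Sym2 V) : Prop :=
  ∃ u v x y : V, e = s(u, v) ∧ f = s(x, y) ∧
    G.dist u x + G.dist v y ≠ G.dist u y + G.dist v x

/-- The set of edges of `G` that are Θ-related to `e`. -/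
def thetaClassOf {V : Type*} (G : SimpleGraph V) (e : Sym2 V) : Set (Sym2 V) :=
  {f | f ∈ G.edgeSet ∧ DWRel G e f}

/-- `C` is a Θ-class of `G`: the class of some edge of `G` under the Djoković–Winkler
relation. -/
def IsThetaClass {V : Type*} (G : SimpleGraph V) (C : Set (Sym2 V)) : Prop :=
  ∃ e ∈ G.edgeSet, C = thetaClassOf G e

/-- `W_{uv}`: the set of vertices strictly closer to `u` than to `v`. -/
def sideW {V : Type*} (G : SimpleGraph V) (u v : V) : Set V :=
  {w | G.dist u w < G.dist v w}

/-- Two Θ-classes `C₁ = F_{ab}` and `C₂ = F_{uv}` cross: all four sets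
`W_{ab} ∩ W_{uv}`, `W_{ba} ∩ W_{uv}`, `W_{ab} ∩ W_{vu}`, `W_{ba} ∩ W_{vu}` are nonempty. -/
def Crosses {V : Type*} (G : SimpleGraph V) (C₁ C₂ : Set (Sym2 V)) : Prop :=
  ∃ a b u v : V, G.Adj a b ∧ G.Adj u v ∧
    C₁ = thetaClassOf G s(a, b) ∧ C₂ = thetaClassOf G s(u, v) ∧
    (sideW G a b ∩ sideW G u v).Nonempty ∧ (sideW G b a ∩ sideW G u v).Nonempty ∧
    (sideW G a b ∩ sideW G v u).Nonempty ∧ (sideW G b a ∩ sideW G v u).Nonempty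

lemma Crosses.symm {V : Type*} {G : SimpleGraph V} {C₁ C₂ : Set (Sym2 V)}
    (h : Crosses G C₁ C₂) : Crosses G C₂ C₁ := by
  obtain ⟨a, b, u, v, hab, huv, h1, h2, n1, n2, n3, n4⟩ := h
  refine ⟨u, v, a, b, huv, hab, h2, h1, ?_, ?_, ?_, ?_⟩ <;> rw [Set.inter_comm]
  exacts [n1, n3, n2, n4]

/-- The crossing graph `G^#` of a partial cube `G`: vertices are the Θ-classes of `G`,
two Θ-classes being adjacent iff they cross. -/
def crossingGraph {V : Type*} (G : SimpleGraph V) :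
    SimpleGraph {C : Set (Sym2 V) // IsThetaClass G C} where
  Adj C₁ C₂ := C₁ ≠ C₂ ∧ Crosses G C₁.1 C₂.1
  symm := ⟨fun _ _ h => ⟨h.1.symm, h.2.symm⟩⟩
  loopless := ⟨fun _ h => h.1 rfl⟩

/-- A median graph: a connected graph in which every triple of vertices has a unique median. -/
def IsMedianGraph {V : Type*} (G : SimpleGraph V) : Prop :=
  G.Connected ∧ ∀ u v w : V, ∃! x : V,
    G.dist u x + G.dist x v = G.dist u v ∧
    G.dist u x + G.dist x w = G.dist u w ∧
    G.dist v x + G.dist x w = G.dist v w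

/-- `α_i(G)`: the number of induced subgraphs of `G` isomorphic to the `i`-cube. -/
noncomputable def cubeCount {V : Type*} (G : SimpleGraph V) (i : ℕ) : ℕ :=
  Nat.card {s : Set V // Nonempty ((G.induce s) ≃g hypercube i)}

/-- The cube polynomial `C(G,x) = Σ_i α_i(G) xⁱ`. -/
noncomputable def cubePoly {V : Type*} [Finite V] (G : SimpleGraph V) : Polynomial ℕ :=
  ∑ i ∈ Finset.range (Nat.card V + 1), Polynomial.C (cubeCount G i) * Polynomial.X ^ i

/-- `a_i(G)`: the number of `i`-cliques of `G` (note `a_0 = 1`, the empty clique). -/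
noncomputable def cliqueCount {V : Type*} (G : SimpleGraph V) (i : ℕ) : ℕ :=
  Nat.card {s : Finset V // G.IsNClique i s}

/-- The clique polynomial `Cl(G,x) = Σ_i a_i(G) xⁱ`. -/
noncomputable def cliquePoly {V : Type*} [Finite V] (G : SimpleGraph V) : Polynomial ℕ :=
  ∑ i ∈ Finset.range (Nat.card V + 1), Polynomial.C (cliqueCount G i) * Polynomial.X ^ i

/-- A set `S` of vertices is convex: every shortest path between vertices of `S`
stays inside `S`. -/
def ConvexSet {V : Type*} (G : SimpleGraph V) (S : Set V) : Prop :=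
  ∀ u ∈ S, ∀ v ∈ S, ∀ p : G.Walk u v, p.length = G.dist u v → ∀ y ∈ p.support, y ∈ S

/-- The convex hull of a vertex set: the smallest convex set containing it. -/
def gConvexHull {V : Type*} (G : SimpleGraph V) (S : Set V) : Set V :=
  ⋂₀ {T : Set V | ConvexSet G T ∧ S ⊆ T}

/-- The Θ-class `θ` occurs in (the subgraph of `G` induced by) `S`. -/
def OccursIn {V : Type*} (G : SimpleGraph V) (θ : Set (Sym2 V)) (S : Set V) : Prop :=
  ∃ a b : V, G.Adj a b ∧ a ∈ S ∧ b ∈ S ∧ s(a, b) ∈ θ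

/-- A `θ₁,θ₂`-alternating 4-cycle `u v w x u`: edges `uv, xw ∈ θ₁` and `ux, vw ∈ θ₂`. -/
def AltFourCycle {V : Type*} (G : SimpleGraph V) (θ₁ θ₂ : Set (Sym2 V)) (u v w x : V) : Prop :=
  G.Adj u v ∧ G.Adj v w ∧ G.Adj w x ∧ G.Adj x u ∧ u ≠ w ∧ v ≠ x ∧
  s(u, v) ∈ θ₁ ∧ s(x, w) ∈ θ₁ ∧ s(u, x) ∈ θ₂ ∧ s(v, w) ∈ θ₂

/-- A polynomial with nonnegative coefficients is unimodal. -/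
def PolyUnimodal (P : Polynomial ℕ) : Prop :=
  ∃ m : ℕ, (∀ i, i < m → P.coeff i ≤ P.coeff (i + 1)) ∧
    (∀ i, m ≤ i → P.coeff (i + 1) ≤ P.coeff i)

/-!
In a median graph the Θ-class of an edge `ab` is the set of edges between the halfspaces `W_ab`
and `W_ba`, and both halfspaces are convex. Convexity is proved by a minimal counterexample: a
vertex `z ∈ W_ba` between `u, v ∈ W_ab` has neighbours `z₁, z₂` towards `u` and `v` that are closer
to `a`; the quadrangle property gives a common neighbour `w` of `z₁, z₂` below them, and either one
of `w, z₁, z₂` is a smaller counterexample or `z` and `w` are two medians of `z₁, z₂, b`.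

For the theorem, take a `θ₁`-edge `pq` of `S`. Since all four quadrants of `θ₁, θ₂` are nonempty,
`p` and `q` lie on the same side of `θ₂`, say in `W_vu`. Medians with a vertex of `S` on the other
side and with the quadrant vertices produce a `θ₁`-edge `xy` of `S` in `W_uv`. Moving `pq` one step
towards `x`, the square spanned by that step (completed by a median, hence in `S`) is either
`θ₁,θ₂`-alternating or gives a `θ₁`-edge of `S` in `W_vu` closer to `x`.
-/

section

variable {V : Type*} {G : SimpleGraph V}

def IntervalConvex (G : SimpleGraph V) (S : Set V) : Prop :=
  ∀ ⦃x y z : V⦄, x ∈ S → y ∈ S → G.dist x z + G.dist z y = G.dist x y → z ∈ S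

def CrossesIn (G : SimpleGraph V) (θ₁ θ₂ : Set (Sym2 V)) (S : Set V) : Prop :=
  ∃ u v w x : V, u ∈ S ∧ v ∈ S ∧ w ∈ S ∧ x ∈ S ∧ AltFourCycle G θ₁ θ₂ u v w x

theorem mem_sideW {a b z : V} : z ∈ sideW G a b ↔ G.dist a z < G.dist b z := Iff.rfl

theorem notMem_sideW_swap {a b z : V} (h : z ∈ sideW G a b) : z ∉ sideW G b a := by
  rw [mem_sideW] at *
  omega

theorem SimpleGraph.Connected.exists_adj_dist_add_one (hc : G.Connected) {x y : V} (h : x ≠ y) :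
    ∃ c, G.Adj x c ∧ G.dist c y + 1 = G.dist x y := by
  obtain ⟨p, hp⟩ := hc.exists_walk_length_eq_dist x y
  cases p with
  | nil => exact absurd rfl h
  | @cons _ c _ hxc p =>
    refine ⟨c, hxc, ?_⟩
    have := dist_le p
    have := hc.dist_triangle (u := x) (v := c) (w := y)
    rw [Walk.length_cons] at hp
    rw [dist_eq_one_iff_adj.2 hxc] at this
    omega

theorem ConvexSet.intervalConvex {S : Set V} (hc : G.Connected) (hS : ConvexSet G S) :
    IntervalConvex G S := by
  intro x y z hx hy h
  obtain ⟨p, hp⟩ := hc.exists_walk_length_eq_dist x z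
  obtain ⟨q, hq⟩ := hc.exists_walk_length_eq_dist z y
  refine hS x hx y hy (p.append q) (by rw [Walk.length_append, hp, hq, h]) z ?_
  exact (Walk.mem_support_append_iff _ _).2 (Or.inl p.end_mem_support)

theorem IntervalConvex.inter {S T : Set V} (hS : IntervalConvex G S) (hT : IntervalConvex G T) :
    IntervalConvex G (S ∩ T) :=
  fun _ _ _ hx hy h => ⟨hS hx.1 hy.1 h, hT hx.2 hy.2 h⟩

theorem IntervalConvex.exists_adj_mem_notMem {S A : Set V} (hc : G.Connected)
    (hS : IntervalConvex G S) {x y : V} (hx : x ∈ S) (hy : y ∈ S) (hxA : x ∈ A) (hyA : y ∉ A) :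
    ∃ x' y', G.Adj x' y' ∧ x' ∈ S ∧ y' ∈ S ∧ x' ∈ A ∧ y' ∉ A := by
  have hxy : x ≠ y := by rintro rfl; exact hyA hxA
  obtain ⟨c, hxc, hcy⟩ := hc.exists_adj_dist_add_one hxy
  have hcS : c ∈ S := hS hx hy (by rw [dist_eq_one_iff_adj.2 hxc]; omega)
  by_cases hcA : c ∈ A
  · exact hS.exists_adj_mem_notMem hc hcS hy hcA hyA
  · exact ⟨x, c, hxc, hx, hcS, hxA, hcA⟩
termination_by G.dist x y
decreasing_by omega

theorem mem_sideW_of_dist_add_dist (hc : G.Connected) {a b w z : V} (hw : w ∈ sideW G a b)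
    (h : G.dist a z + G.dist z w = G.dist a w) : z ∈ sideW G a b := by
  have := hc.dist_triangle (u := b) (v := z) (w := w)
  rw [mem_sideW] at *
  omega

theorem mem_thetaClassOf_of_mem_sideW {a b p q : V} (hpq : G.Adj p q) (hp : p ∈ sideW G a b)
    (hq : q ∈ sideW G b a) : s(p, q) ∈ thetaClassOf G s(a, b) :=
  ⟨hpq, a, b, p, q, rfl, rfl, by rw [mem_sideW] at hp hq; omega⟩

theorem altFourCycle_of_mem_sideW {a b u v p q t c : V} (hpq : G.Adj p q) (hqt : G.Adj q t)
    (htc : G.Adj t c) (hcp : G.Adj c p) (hp : p ∈ sideW G a b ∩ sideW G v u)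
    (hq : q ∈ sideW G b a ∩ sideW G v u) (ht : t ∈ sideW G b a ∩ sideW G u v)
    (hc : c ∈ sideW G a b ∩ sideW G u v) :
    AltFourCycle G (thetaClassOf G s(a, b)) (thetaClassOf G s(u, v)) p q t c := by
  refine ⟨hpq, hqt, htc, hcp, fun h => notMem_sideW_swap hp.1 (h ▸ ht.1),
    fun h => notMem_sideW_swap hc.1 (h ▸ hq.1), mem_thetaClassOf_of_mem_sideW hpq hp.1 hq.1,
    mem_thetaClassOf_of_mem_sideW htc.symm hc.1 ht.1, ?_, ?_⟩
  · rw [show s(p, c) = s(c, p) from Sym2.eq_swap]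
    exact mem_thetaClassOf_of_mem_sideW hcp hc.2 hp.2
  · rw [show s(q, t) = s(t, q) from Sym2.eq_swap]
    exact mem_thetaClassOf_of_mem_sideW hqt.symm ht.2 hq.2

namespace IsMedianGraph

theorem dist_add_one_eq_or (hmed : IsMedianGraph G) {x y : V} (hxy : G.Adj x y) (w : V) :
    G.dist x w + 1 = G.dist y w ∨ G.dist y w + 1 = G.dist x w := by
  obtain ⟨m, h₁, h₂, h₃⟩ := (hmed.2 x y w).exists
  have hyx := dist_eq_one_iff_adj.2 hxy.symm
  rw [dist_eq_one_iff_adj.2 hxy] at h₁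
  rcases Nat.add_eq_one_iff.1 h₁ with ⟨h, -⟩ | ⟨-, h⟩
  · obtain rfl := hmed.1.dist_eq_zero_iff.1 h
    omega
  · obtain rfl := hmed.1.dist_eq_zero_iff.1 h
    omega

theorem mem_sideW_or (hmed : IsMedianGraph G) {a b : V} (hab : G.Adj a b) (w : V) :
    w ∈ sideW G a b ∨ w ∈ sideW G b a := by
  rw [mem_sideW, mem_sideW]
  have := hmed.dist_add_one_eq_or hab w
  omega

theorem notMem_sideW_iff (hmed : IsMedianGraph G) {a b w : V} (hab : G.Adj a b) :
    w ∉ sideW G a b ↔ w ∈ sideW G b a :=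
  ⟨(hmed.mem_sideW_or hab w).resolve_left, notMem_sideW_swap⟩

theorem dist_add_one_of_mem_sideW (hmed : IsMedianGraph G) {a b w : V} (hab : G.Adj a b)
    (hw : w ∈ sideW G a b) : G.dist a w + 1 = G.dist b w := by
  rw [mem_sideW] at hw
  have := hmed.dist_add_one_eq_or hab w
  omega

theorem mem_sideW_of_mem_thetaClassOf (hmed : IsMedianGraph G) {a b p q : V} (hab : G.Adj a b)
    (h : s(p, q) ∈ thetaClassOf G s(a, b)) :
    p ∈ sideW G a b ∧ q ∈ sideW G b a ∨ q ∈ sideW G a b ∧ p ∈ sideW G b a := by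
  obtain ⟨-, a', b', p', q', hab', hpq', hDW⟩ := h
  have hne : G.dist a p + G.dist b q ≠ G.dist a q + G.dist b p := by
    rcases Sym2.eq_iff.1 hab' with ⟨rfl, rfl⟩ | ⟨rfl, rfl⟩ <;>
      rcases Sym2.eq_iff.1 hpq' with ⟨rfl, rfl⟩ | ⟨rfl, rfl⟩ <;> omega
  simp only [mem_sideW]
  have := hmed.dist_add_one_eq_or hab p
  have := hmed.dist_add_one_eq_or hab q
  omega

theorem exists_adj_mem_sideW_of_occursIn (hmed : IsMedianGraph G) {a b : V} {S : Set V}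
    (hab : G.Adj a b) (h : OccursIn G (thetaClassOf G s(a, b)) S) :
    ∃ p q, G.Adj p q ∧ p ∈ S ∧ q ∈ S ∧ p ∈ sideW G a b ∧ q ∈ sideW G b a := by
  obtain ⟨p, q, hpq, hpS, hqS, hθ⟩ := h
  rcases hmed.mem_sideW_of_mem_thetaClassOf hab hθ with ⟨hp, hq⟩ | ⟨hq, hp⟩
  · exact ⟨p, q, hpq, hpS, hqS, hp, hq⟩
  · exact ⟨q, p, hpq.symm, hqS, hpS, hq, hp⟩

theorem exists_adj_closer_of_not_between (hmed : IsMedianGraph G) {u z a : V}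
    (h : G.dist u z + G.dist z a ≠ G.dist u a) :
    ∃ z₁, G.Adj z z₁ ∧ G.dist u z₁ + 1 = G.dist u z ∧ G.dist a z₁ + 1 = G.dist a z := by
  obtain ⟨m, h₁, h₂, h₃⟩ := (hmed.2 u z a).exists
  have hzm : z ≠ m := by rintro rfl; exact h h₂
  obtain ⟨z₁, hzz₁, hz₁m⟩ := hmed.1.exists_adj_dist_add_one hzm
  have closer (t : V) (ht : G.dist t m + G.dist m z = G.dist t z) :
      G.dist t z₁ + 1 = G.dist t z := by
    have := hmed.1.dist_triangle (u := t) (v := m) (w := z₁)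
    have := hmed.1.dist_triangle (u := t) (v := z₁) (w := z)
    have := dist_eq_one_iff_adj.2 hzz₁.symm
    have := G.dist_comm (u := m) (v := z₁)
    have := G.dist_comm (u := m) (v := z)
    omega
  refine ⟨z₁, hzz₁, closer u h₁, closer a ?_⟩
  rw [G.dist_comm (u := a), G.dist_comm (u := m) (v := z), G.dist_comm (u := a)]
  omega

theorem exists_common_adj_closer (hmed : IsMedianGraph G) {x y a : V} (hxy : G.dist x y = 2)
    (h : G.dist a x = G.dist a y) :
    ∃ w, G.Adj x w ∧ G.Adj y w ∧ G.dist a w + 1 = G.dist a x := by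
  obtain ⟨w, h₁, h₂, h₃⟩ := (hmed.2 x y a).exists
  have := G.dist_comm (u := a) (v := x)
  have := G.dist_comm (u := a) (v := y)
  have := G.dist_comm (u := a) (v := w)
  have := G.dist_comm (u := y) (v := w)
  refine ⟨w, dist_eq_one_iff_adj.1 (by omega), dist_eq_one_iff_adj.1 (by omega), by omega⟩

theorem eq_of_common_adj_closer (hmed : IsMedianGraph G) {x y a w w' : V}
    (hxy : G.dist x y = 2) (h : G.dist a x = G.dist a y)
    (hxw : G.Adj x w) (hyw : G.Adj y w) (hw : G.dist a w + 1 = G.dist a x)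
    (hxw' : G.Adj x w') (hyw' : G.Adj y w') (hw' : G.dist a w' + 1 = G.dist a x) : w = w' := by
  have := dist_eq_one_iff_adj.2 hxw
  have := dist_eq_one_iff_adj.2 hyw
  have := dist_eq_one_iff_adj.2 hxw'
  have := dist_eq_one_iff_adj.2 hyw'
  have := G.dist_comm (u := a) (v := x)
  have := G.dist_comm (u := a) (v := y)
  have := G.dist_comm (u := a) (v := w)
  have := G.dist_comm (u := a) (v := w')
  have := G.dist_comm (u := y) (v := w)
  have := G.dist_comm (u := y) (v := w')
  exact (hmed.2 x y a).unique (y₁ := w) (y₂ := w') ⟨by omega, by omega, by omega⟩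
    ⟨by omega, by omega, by omega⟩

theorem intervalConvex_sideW (hmed : IsMedianGraph G) {a b : V} (hab : G.Adj a b) :
    IntervalConvex G (sideW G a b) := by
  intro u v z hu hv huzv
  induction' hN : G.dist u v + G.dist a z using Nat.strong_induction_on with N ih
    generalizing u v z
  by_contra hz
  have hzb := hmed.dist_add_one_of_mem_sideW hab.symm ((hmed.notMem_sideW_iff hab).1 hz)
  have hnot (x : V) (hx : x ∈ sideW G a b) : G.dist x z + G.dist z a ≠ G.dist x a := by
    intro h
    refine hz (mem_sideW_of_dist_add_dist hmed.1 hx ?_)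
    rw [G.dist_comm (u := a), G.dist_comm (u := a), G.dist_comm (u := z) (v := x)]
    omega
  obtain ⟨z₁, hzz₁, hz₁u, hz₁a⟩ := hmed.exists_adj_closer_of_not_between (hnot u hu)
  obtain ⟨z₂, hzz₂, hz₂v, hz₂a⟩ := hmed.exists_adj_closer_of_not_between (hnot v hv)
  have := dist_eq_one_iff_adj.2 hzz₁
  have := dist_eq_one_iff_adj.2 hzz₂
  have := G.dist_comm (u := v) (v := z)
  have := G.dist_comm (u := v) (v := z₂)
  have := G.dist_comm (u := z₁) (v := z)
  have := hmed.1.dist_triangle (u := u) (v := z₁) (w := v)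
  have := hmed.1.dist_triangle (u := z₁) (v := z₂) (w := v)
  have := hmed.1.dist_triangle (u := z₁) (v := z) (w := z₂)
  have hz₁₂ : G.dist z₁ z₂ = 2 := by omega
  obtain ⟨w, hz₁w, hz₂w, hwa⟩ := hmed.exists_common_adj_closer hz₁₂ (a := a) (by omega)
  have := dist_eq_one_iff_adj.2 hz₁w
  have := dist_eq_one_iff_adj.2 hz₂w
  have := G.dist_comm (u := z₂) (v := w)
  have := hmed.1.dist_triangle (u := u) (v := z₁) (w := w)
  have := hmed.1.dist_triangle (u := w) (v := z₂) (w := v)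
  have := hmed.1.dist_triangle (u := u) (v := w) (w := v)
  have hw : w ∈ sideW G a b := ih _ (by omega) hu hv (by omega) rfl
  have hz₁ : z₁ ∈ sideW G a b := ih _ (by omega) hu hw (by omega) rfl
  have hz₂ : z₂ ∈ sideW G a b := ih _ (by omega) hw hv (by omega) rfl
  have := hmed.dist_add_one_of_mem_sideW hab hw
  have := hmed.dist_add_one_of_mem_sideW hab hz₁
  have := hmed.dist_add_one_of_mem_sideW hab hz₂
  have hzw : z = w := hmed.eq_of_common_adj_closer hz₁₂ (a := b) (by omega) hzz₁.symm hzz₂.symm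
    (by omega) hz₁w hz₂w (by omega)
  exact hz (hzw ▸ hw)

theorem sideW_eq_of_mem_sideW (hmed : IsMedianGraph G) {a b p q : V} (hab : G.Adj a b)
    (hpq : G.Adj p q) (hp : p ∈ sideW G a b) (hq : q ∈ sideW G b a) :
    sideW G p q = sideW G a b := by
  have key {a b p q w : V} (hab : G.Adj a b) (hpq : G.Adj p q) (hp : p ∈ sideW G a b)
      (hq : q ∈ sideW G b a) (hw : w ∈ sideW G a b) : w ∈ sideW G p q := by
    rw [mem_sideW]
    rcases hmed.dist_add_one_eq_or hpq w with h | h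
    · omega
    · refine absurd (hmed.intervalConvex_sideW hab hp hw ?_) (notMem_sideW_swap hq)
      rw [dist_eq_one_iff_adj.2 hpq, add_comm, h]
  ext w
  refine ⟨fun hw => ?_, key hab hpq hp hq⟩
  by_contra hwa
  have := key hab.symm hpq.symm hq hp ((hmed.notMem_sideW_iff hab).1 hwa)
  rw [mem_sideW] at hw this
  omega

theorem not_adj_of_mem_inter_sideW (hmed : IsMedianGraph G) {a b u v x y r : V}
    (hab : G.Adj a b) (huv : G.Adj u v) (hx : x ∈ sideW G a b ∩ sideW G u v)
    (hy : y ∈ sideW G b a ∩ sideW G v u) (hr : r ∈ sideW G a b ∩ sideW G v u) :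
    ¬G.Adj x y := by
  intro hxy
  rcases hmed.dist_add_one_eq_or hxy r with h | h
  · refine notMem_sideW_swap hx.2 (hmed.intervalConvex_sideW huv.symm hy.2 hr.2 ?_)
    rw [dist_eq_one_iff_adj.2 hxy.symm, add_comm, h]
  · refine notMem_sideW_swap hy.1 (hmed.intervalConvex_sideW hab hx.1 hr.1 ?_)
    rw [dist_eq_one_iff_adj.2 hxy, add_comm, h]

theorem exists_square_completion (hmed : IsMedianGraph G) {a b p q x y c : V}
    (hab : G.Adj a b) (hpq : G.Adj p q) (hxy : G.Adj x y) (hp : p ∈ sideW G a b)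
    (hq : q ∈ sideW G b a) (hx : x ∈ sideW G a b) (hy : y ∈ sideW G b a) (hpc : G.Adj p c)
    (hcx : G.dist c x + 1 = G.dist p x) :
    ∃ t, G.Adj q t ∧ G.Adj c t ∧ t ∈ sideW G b a ∧ G.dist q t + G.dist t c = G.dist q c := by
  have hpc₁ := dist_eq_one_iff_adj.2 hpc
  have hc : c ∈ sideW G a b := hmed.intervalConvex_sideW hab hp hx (by omega)
  have hqy : G.dist q y = G.dist p x := by
    have h₁ := hmed.dist_add_one_of_mem_sideW hpq (w := x)
      (by rwa [hmed.sideW_eq_of_mem_sideW hab hpq hp hq])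
    have h₂ := hmed.dist_add_one_of_mem_sideW hxy.symm (w := q)
      (by rwa [hmed.sideW_eq_of_mem_sideW hab.symm hxy.symm hy hx])
    have := G.dist_comm (u := x) (v := q)
    have := G.dist_comm (u := y) (v := q)
    have := dist_eq_one_iff_adj.2 hxy
    have := hmed.1.dist_triangle (u := q) (v := y) (w := x)
    omega
  have hqc : G.dist q c = 2 := by
    have hne : q ≠ c := fun h => notMem_sideW_swap hc (h ▸ hq)
    have hnadj : ¬G.Adj q c := fun h => by
      have := hmed.dist_add_one_eq_or h p
      rw [G.dist_comm, dist_eq_one_iff_adj.2 hpq, G.dist_comm, hpc₁] at this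
      omega
    have := hmed.1.one_lt_dist_of_ne_of_not_adj hne hnadj
    have := hmed.1.dist_triangle (u := q) (v := p) (w := c)
    have := dist_eq_one_iff_adj.2 hpq.symm
    omega
  obtain ⟨t, h₁, h₂, h₃⟩ := (hmed.2 q c y).exists
  have htb : t ∈ sideW G b a := hmed.intervalConvex_sideW hab.symm hq hy h₂
  have htc : t ≠ c := fun h => notMem_sideW_swap hc (h ▸ htb)
  have := hmed.1.pos_dist_of_ne htc
  have := hmed.1.dist_triangle (u := c) (v := x) (w := y)
  have := dist_eq_one_iff_adj.2 hxy
  have := G.dist_comm (u := c) (v := t)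
  exact ⟨t, dist_eq_one_iff_adj.1 (by omega), dist_eq_one_iff_adj.1 (by omega), htb, by omega⟩

theorem crossesIn_of_separated_edges (hmed : IsMedianGraph G) {S : Set V} (hS : IntervalConvex G S)
    {a b u v p q x y : V} (hab : G.Adj a b) (huv : G.Adj u v) (hpq : G.Adj p q)
    (hxy : G.Adj x y) (hpS : p ∈ S) (hqS : q ∈ S) (hxS : x ∈ S) (hyS : y ∈ S)
    (hp : p ∈ sideW G a b ∩ sideW G v u) (hq : q ∈ sideW G b a ∩ sideW G v u)
    (hx : x ∈ sideW G a b ∩ sideW G u v) (hy : y ∈ sideW G b a) :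
    CrossesIn G (thetaClassOf G s(a, b)) (thetaClassOf G s(u, v)) S := by
  have hpx : p ≠ x := fun h => notMem_sideW_swap hx.2 (h ▸ hp.2)
  obtain ⟨c, hpc, hcx⟩ := hmed.1.exists_adj_dist_add_one hpx
  have hpcx : G.dist p c + G.dist c x = G.dist p x := by
    rw [dist_eq_one_iff_adj.2 hpc]; omega
  have hcS : c ∈ S := hS hpS hxS hpcx
  have hc : c ∈ sideW G a b := hmed.intervalConvex_sideW hab hp.1 hx.1 hpcx
  obtain ⟨t, hqt, hct, ht, hqtc⟩ :=
    hmed.exists_square_completion hab hpq hxy hp.1 hq.1 hx.1 hy hpc hcx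
  have htS : t ∈ S := hS hqS hcS hqtc
  rcases hmed.mem_sideW_or huv c with hcu | hcv
  · have htu : t ∈ sideW G u v := by
      rw [← hmed.notMem_sideW_iff huv.symm]
      exact fun htv => hmed.not_adj_of_mem_inter_sideW hab huv ⟨hc, hcu⟩ ⟨ht, htv⟩ hp hct
    exact ⟨p, q, t, c, hpS, hqS, htS, hcS,
      altFourCycle_of_mem_sideW hpq hqt hct.symm hpc.symm hp hq ⟨ht, htu⟩ ⟨hc, hcu⟩⟩
  · have htv : t ∈ sideW G v u := by
      rw [← hmed.notMem_sideW_iff huv]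
      exact fun htu => hmed.not_adj_of_mem_inter_sideW hab.symm huv ⟨ht, htu⟩ ⟨hc, hcv⟩ hq hct.symm
    exact hmed.crossesIn_of_separated_edges hS hab huv hct hxy hcS htS hxS hyS ⟨hc, hcv⟩ ⟨ht, htv⟩
      hx hy
termination_by G.dist p x
decreasing_by omega

theorem crossesIn_of_edge_of_quadrants (hmed : IsMedianGraph G) {S : Set V}
    (hS : IntervalConvex G S) {a b u v p q r z₁ z₂ : V} (hab : G.Adj a b) (huv : G.Adj u v) (hpq : G.Adj p q)
    (hpS : p ∈ S) (hqS : q ∈ S) (hp : p ∈ sideW G a b ∩ sideW G v u)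
    (hq : q ∈ sideW G b a ∩ sideW G v u) (hrS : r ∈ S) (hr : r ∈ sideW G u v)
    (hz₁ : z₁ ∈ sideW G a b ∩ sideW G u v) (hz₂ : z₂ ∈ sideW G b a ∩ sideW G u v) :
    CrossesIn G (thetaClassOf G s(a, b)) (thetaClassOf G s(u, v)) S := by
  have hT := hS.inter (hmed.intervalConvex_sideW huv)
  obtain ⟨w₁, h₁, h₂, h₃⟩ := (hmed.2 p r z₁).exists
  obtain ⟨w₂, h₁', h₂', h₃'⟩ := (hmed.2 q r z₂).exists
  have hw₁ : w₁ ∈ sideW G a b := hmed.intervalConvex_sideW hab hp.1 hz₁.1 h₂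
  have hw₂ : w₂ ∈ sideW G b a := hmed.intervalConvex_sideW hab.symm hq.1 hz₂.1 h₂'
  obtain ⟨x, y, hxy, hxT, hyT, hx, hy⟩ := hT.exists_adj_mem_notMem hmed.1
    ⟨hS hpS hrS h₁, hmed.intervalConvex_sideW huv hr hz₁.2 h₃⟩
    ⟨hS hqS hrS h₁', hmed.intervalConvex_sideW huv hr hz₂.2 h₃'⟩ hw₁
    (notMem_sideW_swap hw₂)
  exact hmed.crossesIn_of_separated_edges hS hab huv hpq hxy hpS hqS hxT.1 hyT.1 hp hq ⟨hx, hxT.2⟩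
    ((hmed.notMem_sideW_iff hab).1 hy)

end IsMedianGraph

end

theorem crosses_in_convex_subgraph_general {V : Type*} (G : SimpleGraph V)
    (hmed : IsMedianGraph G) (S : Set V) (hconv : ConvexSet G S)
    (θ₁ θ₂ : Set (Sym2 V))
    (hcross : Crosses G θ₁ θ₂) (ho₁ : OccursIn G θ₁ S) (ho₂ : OccursIn G θ₂ S) :
    ∃ u v w x : V, u ∈ S ∧ v ∈ S ∧ w ∈ S ∧ x ∈ S ∧ AltFourCycle G θ₁ θ₂ u v w x := by
  obtain ⟨a, b, u, v, hab, huv, rfl, rfl, ⟨z₁, hz₁⟩, ⟨z₂, hz₂⟩, ⟨z₃, hz₃⟩, ⟨z₄, hz₄⟩⟩ := hcross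
  have hS := hconv.intervalConvex hmed.1
  obtain ⟨p, q, hpq, hpS, hqS, hp, hq⟩ := hmed.exists_adj_mem_sideW_of_occursIn hab ho₁
  obtain ⟨r, s, -, hrS, hsS, hr, hs⟩ := hmed.exists_adj_mem_sideW_of_occursIn huv ho₂
  rcases hmed.mem_sideW_or huv p with hpu | hpv
  · have hqu : q ∈ sideW G u v := by
      rw [← hmed.notMem_sideW_iff huv.symm]
      exact fun hqv => hmed.not_adj_of_mem_inter_sideW hab huv ⟨hp, hpu⟩ ⟨hq, hqv⟩ hz₃ hpq
    rw [show s(u, v) = s(v, u) from Sym2.eq_swap]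
    exact hmed.crossesIn_of_edge_of_quadrants hS hab huv.symm hpq hpS hqS ⟨hp, hpu⟩ ⟨hq, hqu⟩
      hsS hs hz₃ hz₄
  · have hqv : q ∈ sideW G v u := by
      rw [← hmed.notMem_sideW_iff huv]
      exact fun hqu => hmed.not_adj_of_mem_inter_sideW hab.symm huv ⟨hq, hqu⟩ ⟨hp, hpv⟩ hz₄ hpq.symm
    exact hmed.crossesIn_of_edge_of_quadrants hS hab huv hpq hpS hqS ⟨hp, hpv⟩ ⟨hq, hqv⟩
      hrS hr hz₁ hz₂

/-- Let `G` be a finite median graph, `S` (the vertex set of) a convex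
subgraph, and `θ₁, θ₂` two crossing Θ-classes. If both occur in `S`, then they cross in `S`,
i.e. `S` contains a `θ₁,θ₂`-alternating 4-cycle. -/
theorem crosses_in_convex_subgraph {V : Type*} [Finite V] (G : SimpleGraph V)
    (hmed : IsMedianGraph G) (S : Set V) (hconv : ConvexSet G S)
    (θ₁ θ₂ : Set (Sym2 V)) (h₁ : IsThetaClass G θ₁) (h₂ : IsThetaClass G θ₂)
    (hcross : Crosses G θ₁ θ₂) (ho₁ : OccursIn G θ₁ S) (ho₂ : OccursIn G θ₂ S) :
    ∃ u v w x : V, u ∈ S ∧ v ∈ S ∧ w ∈ S ∧ x ∈ S ∧ AltFourCycle G θ₁ θ₂ u v w x :=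
  crosses_in_convex_subgraph_general G hmed S hconv θ₁ θ₂ hcross ho₁ ho₂
end

section
/- Let n ≥ 1 and m ≥ 0 be integers and let G be the graph obtained from the hypercube Q_n by attaching m pendant vertices (each new vertex joined by a single edge to some vertex of Q_n). Then G is a median graph and C(G,x) = (x+2)^n + m·(x+1). Moreover, if n ≥ 9 and m ≥ ((n² − 5n)/2)·2^(n−2) + 1, then C(G,x) is not unimodal; hence cube polynomials of median graphs need not be unimodal. -/
open SimpleGraph Polynomial

/-- The graph obtained from `G` by attaching `m` pendant vertices, the `j`-th pendant being
joined by a single edge to the vertex `f j` of `G`. -/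
def withPendants {V : Type*} (G : SimpleGraph V) (m : ℕ) (f : Fin m → V) :
    SimpleGraph (V ⊕ Fin m) where
  Adj x y := match x, y with
    | Sum.inl u, Sum.inl v => G.Adj u v
    | Sum.inl u, Sum.inr j => u = f j
    | Sum.inr j, Sum.inl v => f j = v
    | Sum.inr _, Sum.inr _ => False
  symm := by
    refine ⟨?_⟩
    rintro (u | i) (v | j) h
    · exact h.symm
    · exact h.symm
    · exact h.symm
    · exact h
  loopless := by
    refine ⟨?_⟩
    rintro (u | i) h
    · exact G.irrefl h
    · exact h

/-!
Distances in `Q_n` are Hamming distances, so a vertex lies between `u` and `v` iff it agrees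
with them wherever they agree; the median of `u, v, w` is therefore the coordinatewise majority,
and it is unique. A pendant vertex changes no distance between the old vertices and lies strictly
between no two vertices, so the medians of `u, v, w` in the new graph are the medians of their
attachment points.

An embedding of `Q_i` into `Q_n` is determined by the images of `0` and of its neighbours
(propagated across 4-cycles), so every induced `Q_i` of `Q_n` is a subcube and there are
`C(n,i) 2^(n-i)` of them. A pendant vertex has degree one, so the only new induced cubes are the
`m` pendant vertices and the `m` pendant edges: `C(G,x) = (x+2)^n + m(x+1)`. For `n ≥ 9` and `m`
as large as assumed, the coefficients satisfy `c₁ > c₂ < c₃`.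
-/

namespace SimpleGraph

variable {V : Type*} {G : SimpleGraph V}

theorem Walk.le_length_of_triangle {D : V → V → ℕ} (h0 : ∀ x, D x x = 0)
    (htri : ∀ x y z, D x z ≤ D x y + D y z) (hadj : ∀ x y, G.Adj x y → D x y ≤ 1)
    {x y : V} (p : G.Walk x y) : D x y ≤ p.length := by
  induction p with
  | nil => simp [h0]
  | @cons x z y h p ih =>
    rw [length_cons]
    linarith [htri x z y, hadj x z h]

theorem dist_eq_of_triangle {D : V → V → ℕ} (h0 : ∀ x, D x x = 0)
    (htri : ∀ x y z, D x z ≤ D x y + D y z) (hadj : ∀ x y, G.Adj x y → D x y ≤ 1)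
    (hwalk : ∀ x y, ∃ p : G.Walk x y, p.length = D x y) (x y : V) : G.dist x y = D x y := by
  obtain ⟨p, hp⟩ := hwalk x y
  obtain ⟨q, hq⟩ := Reachable.exists_walk_length_eq_dist ⟨p⟩
  exact le_antisymm (hp ▸ dist_le p) (hq ▸ q.le_length_of_triangle h0 htri hadj)

def interval (G : SimpleGraph V) (u v : V) : Set V :=
  {x | G.dist u x + G.dist x v = G.dist u v}

theorem mem_interval {u v x : V} :
    x ∈ G.interval u v ↔ G.dist u x + G.dist x v = G.dist u v :=
  Iff.rfl

theorem left_mem_interval (u v : V) : u ∈ G.interval u v := by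
  simp [interval]

theorem right_mem_interval (u v : V) : v ∈ G.interval u v := by
  simp [interval]

theorem Connected.mem_interval_self_iff (hG : G.Connected) {u x : V} :
    x ∈ G.interval u u ↔ x = u := by
  simp [interval, hG.dist_eq_zero_iff, eq_comm]

theorem isMedianGraph_iff : IsMedianGraph G ↔ G.Connected ∧ ∀ u v w, ∃! x,
    x ∈ G.interval u v ∧ x ∈ G.interval u w ∧ x ∈ G.interval v w :=
  Iff.rfl

theorem isMedianGraph_of_pairwise_ne (hG : G.Connected)
    (h : ∀ u v w, u ≠ v → u ≠ w → v ≠ w → ∃! x,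
      x ∈ G.interval u v ∧ x ∈ G.interval u w ∧ x ∈ G.interval v w) :
    IsMedianGraph G := by
  refine isMedianGraph_iff.2 ⟨hG, fun u v w => ?_⟩
  by_cases huv : u = v
  · subst huv
    exact ⟨u, ⟨left_mem_interval .., left_mem_interval .., left_mem_interval ..⟩,
      fun x hx => hG.mem_interval_self_iff.1 hx.1⟩
  by_cases huw : u = w
  · subst huw
    exact ⟨u, ⟨left_mem_interval .., hG.mem_interval_self_iff.2 rfl, right_mem_interval ..⟩,
      fun x hx => hG.mem_interval_self_iff.1 hx.2.1⟩
  by_cases hvw : v = w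
  · subst hvw
    exact ⟨v, ⟨right_mem_interval .., right_mem_interval .., hG.mem_interval_self_iff.2 rfl⟩,
      fun x hx => hG.mem_interval_self_iff.1 hx.2.2⟩
  exact h u v w huv huw hvw

end SimpleGraph

section CubeCount

variable {V W : Type*} {G : SimpleGraph V}

theorem nonempty_induce_iso_iff_exists_range_eq {H : SimpleGraph W} {s : Set V} :
    Nonempty (G.induce s ≃g H) ↔ ∃ φ : H ↪g G, Set.range φ = s := by
  constructor
  · rintro ⟨e⟩
    refine ⟨(Embedding.induce s).comp e.symm.toEmbedding, ?_⟩
    have : Set.range e.symm.toEmbedding = Set.univ := e.symm.surjective.range_eq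
    simp only [Embedding.coe_comp, Set.range_comp, this, Set.image_univ]
    exact Subtype.range_coe
  · rintro ⟨φ, rfl⟩
    exact ⟨φ.isoInduceRange.symm⟩

theorem cubeCount_eq_ncard (G : SimpleGraph V) (i : ℕ) :
    cubeCount G i = (Set.range fun φ : hypercube i ↪g G => Set.range φ).ncard :=
  Nat.card_congr (Equiv.subtypeEquivRight fun _ => nonempty_induce_iso_iff_exists_range_eq)

theorem cubeCount_eq_zero_of_card_lt [Finite V] (G : SimpleGraph V) {i : ℕ}
    (hi : Nat.card V < i) : cubeCount G i = 0 := by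
  have : IsEmpty (hypercube i ↪g G) := ⟨fun φ => by
    have := Nat.card_le_card_of_injective φ φ.injective
    simp only [Nat.card_eq_fintype_card, Fintype.card_pi, Fintype.card_bool,
      Finset.prod_const, Finset.card_univ, Fintype.card_fin] at this
    have := i.lt_two_pow_self
    omega⟩
  simp [cubeCount_eq_ncard, Set.range_eq_empty]

theorem coeff_cubePoly [Finite V] (G : SimpleGraph V) (i : ℕ) :
    (cubePoly G).coeff i = cubeCount G i := by
  simp only [cubePoly, Polynomial.finsetSum_coeff, Polynomial.coeff_C_mul_X_pow,
    Finset.sum_ite_eq, Finset.mem_range]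
  split_ifs with hi
  · rfl
  · exact (cubeCount_eq_zero_of_card_lt G (by omega)).symm

end CubeCount

section Hypercube

variable {ι : Type*} [DecidableEq ι] {n : ℕ}

def flipAt (x : ι → Bool) (j : ι) : ι → Bool :=
  Function.update x j (!x j)

@[simp]
theorem flipAt_apply_self (x : ι → Bool) (j : ι) : flipAt x j j = !x j := by
  simp [flipAt]

theorem flipAt_apply_of_ne (x : ι → Bool) {j k : ι} (h : k ≠ j) : flipAt x j k = x k := by
  simp [flipAt, h]

@[simp]
theorem flipAt_flipAt (x : ι → Bool) (j : ι) : flipAt (flipAt x j) j = x := by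
  ext k
  by_cases h : k = j
  · subst h; simp
  · simp [flipAt_apply_of_ne _ h]

theorem flipAt_comm (x : ι → Bool) (j k : ι) :
    flipAt (flipAt x j) k = flipAt (flipAt x k) j := by
  ext l
  by_cases hj : l = j <;> by_cases hk : l = k <;> subst_vars <;>
    simp [flipAt_apply_of_ne, *]

theorem flipAt_injective (x : ι → Bool) : Function.Injective (flipAt x) := by
  intro j k h
  by_contra hjk
  simpa [flipAt_apply_of_ne _ hjk] using congrFun h j

theorem hypercube_adj_iff {x y : Fin n → Bool} :
    (hypercube n).Adj x y ↔ ∃ j, y = flipAt x j := by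
  constructor
  · rintro ⟨j, hj, huniq⟩
    refine ⟨j, funext fun k => ?_⟩
    by_cases hk : k = j
    · subst hk
      rw [flipAt_apply_self]
      exact Bool.eq_not_iff.2 (Ne.symm hj)
    · rw [flipAt_apply_of_ne _ hk]
      by_contra h
      exact hk (huniq k (Ne.symm h))
  · rintro ⟨j, rfl⟩
    refine ⟨j, by simp, fun k hk => ?_⟩
    by_contra h
    exact hk (flipAt_apply_of_ne x h).symm

theorem hypercube_adj_flipAt (x : Fin n → Bool) (j : Fin n) :
    (hypercube n).Adj x (flipAt x j) :=
  hypercube_adj_iff.2 ⟨j, rfl⟩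

theorem hypercube_adj_iff_hammingDist {x y : Fin n → Bool} :
    (hypercube n).Adj x y ↔ hammingDist x y = 1 := by
  rw [hammingDist, Finset.card_eq_one]
  simp only [Finset.eq_singleton_iff_unique_mem, Finset.mem_filter, Finset.mem_univ, true_and]
  rfl

theorem hammingDist_flipAt_add_one {x y : Fin n → Bool} {j : Fin n} (h : x j ≠ y j) :
    hammingDist (flipAt x j) y + 1 = hammingDist x y := by
  have hset : ({k | flipAt x j k ≠ y k} : Finset (Fin n)) =
      ({k | x k ≠ y k} : Finset _).erase j := by
    ext k
    by_cases hk : k = j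
    · subst hk; simpa using h
    · simp [hk, flipAt_apply_of_ne]
  rw [hammingDist, hset, Finset.card_erase_add_one (by simpa using h), hammingDist]

theorem hypercube_one_adj_iff {x y : Fin 1 → Bool} : (hypercube 1).Adj x y ↔ x 0 ≠ y 0 := by
  simp [hypercube, Fin.exists_fin_one]

theorem eq_or_hypercube_one_adj (x y : Fin 1 → Bool) : x = y ∨ (hypercube 1).Adj y x := by
  rw [hypercube_one_adj_iff]
  by_cases h : x 0 = y 0
  · exact .inl (funext (Fin.forall_fin_one.2 h))
  · exact .inr (Ne.symm h)

theorem exists_hypercube_walk_length_eq_hammingDist (x y : Fin n → Bool) :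
    ∃ p : (hypercube n).Walk x y, p.length = hammingDist x y := by
  induction hd : hammingDist x y generalizing x with
  | zero =>
    obtain rfl := hammingDist_eq_zero.1 hd
    exact ⟨.nil, rfl⟩
  | succ d ih =>
    obtain ⟨j, hj⟩ : ∃ j, x j ≠ y j := by
      by_contra! h
      simp [funext h] at hd
    obtain ⟨p, hp⟩ := ih (flipAt x j) (by linarith [hammingDist_flipAt_add_one hj])
    exact ⟨.cons (hypercube_adj_flipAt x j) p, by simp [hp]⟩

theorem hypercube_dist (x y : Fin n → Bool) : (hypercube n).dist x y = hammingDist x y :=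
  dist_eq_of_triangle hammingDist_self hammingDist_triangle
    (fun _ _ h => (hypercube_adj_iff_hammingDist.1 h).le)
    exists_hypercube_walk_length_eq_hammingDist x y

theorem hypercube_connected : (hypercube n).Connected :=
  have : Nonempty (Fin n → Bool) := ⟨fun _ => false⟩
  .mk fun x y => ⟨(exists_hypercube_walk_length_eq_hammingDist x y).choose⟩

theorem mem_hypercube_interval_iff {u v t : Fin n → Bool} :
    t ∈ (hypercube n).interval u v ↔ ∀ j, u j = v j → t j = u j := by
  have hcoord : ∀ a b c : Bool, (if a ≠ c then 1 else 0 : ℕ) ≤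
      (if a ≠ b then 1 else 0) + (if b ≠ c then 1 else 0) := by
    decide
  have hcoord_eq : ∀ a b c : Bool, (if a ≠ c then 1 else 0 : ℕ) =
      (if a ≠ b then 1 else 0) + (if b ≠ c then 1 else 0) ↔ (a = c → b = a) := by
    decide
  simp only [mem_interval, hypercube_dist, hammingDist, Finset.card_filter,
    ← Finset.sum_add_distrib]
  rw [eq_comm, Finset.sum_eq_sum_iff_of_le fun j _ => hcoord (u j) (t j) (v j)]
  simp only [Finset.mem_univ, forall_const, hcoord_eq]

def majority (a b c : Bool) : Bool := (a && b) || (a && c) || (b && c)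

theorem isMedianGraph_hypercube : IsMedianGraph (hypercube n) := by
  have hcoord : ∀ a b c d : Bool,
      ((a = b → d = a) ∧ (a = c → d = a) ∧ (b = c → d = b)) ↔ d = majority a b c := by
    decide
  refine isMedianGraph_iff.2 ⟨hypercube_connected, fun u v w => ?_⟩
  simp only [mem_hypercube_interval_iff, ← forall_and, hcoord]
  exact ⟨fun j => majority (u j) (v j) (w j), fun _ => rfl, fun t ht => funext ht⟩

end Hypercube

section Subcubes

variable {n i : ℕ}

def subcube (A : Finset (Fin n)) (b : Fin n → Bool) : Set (Fin n → Bool) :=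
  {v | ∀ j ∉ A, v j = b j}

/-- `cubeMap c b x = b + Σ_{x k = 1} e_{c k}`, with addition in `(ℤ/2)^n`. -/
noncomputable def cubeMap (c : Fin i ↪ Fin n) (b : Fin n → Bool) (x : Fin i → Bool) :
    Fin n → Bool :=
  fun j => xor (b j) (Function.extend c x (fun _ => false) j)

theorem cubeMap_apply_embedding (c : Fin i ↪ Fin n) (b : Fin n → Bool) (x : Fin i → Bool)
    (k : Fin i) : cubeMap c b x (c k) = xor (b (c k)) (x k) := by
  simp [cubeMap, c.injective.extend_apply]

theorem cubeMap_apply_of_notMem {c : Fin i ↪ Fin n} {j : Fin n} (hj : ∀ k, c k ≠ j)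
    (b : Fin n → Bool) (x : Fin i → Bool) : cubeMap c b x j = b j := by
  simp [cubeMap, Function.extend_apply' _ _ _ fun ⟨k, hk⟩ => hj k hk]

theorem cubeMap_false (c : Fin i ↪ Fin n) (b : Fin n → Bool) :
    cubeMap c b (fun _ => false) = b := by
  ext j
  by_cases hj : ∃ k, c k = j
  · obtain ⟨k, rfl⟩ := hj
    simp [cubeMap_apply_embedding]
  · exact cubeMap_apply_of_notMem (not_exists.1 hj) b _

theorem cubeMap_flipAt (c : Fin i ↪ Fin n) (b : Fin n → Bool) (x : Fin i → Bool) (k : Fin i) :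
    cubeMap c b (flipAt x k) = flipAt (cubeMap c b x) (c k) := by
  ext j
  by_cases hj : ∃ l, c l = j
  · obtain ⟨l, rfl⟩ := hj
    by_cases hl : l = k
    · subst hl
      simp [cubeMap_apply_embedding]
    · rw [flipAt_apply_of_ne _ (c.injective.ne hl), cubeMap_apply_embedding,
        cubeMap_apply_embedding, flipAt_apply_of_ne _ hl]
  · rw [not_exists] at hj
    rw [flipAt_apply_of_ne _ (Ne.symm (hj k)), cubeMap_apply_of_notMem hj,
      cubeMap_apply_of_notMem hj]

theorem hammingDist_cubeMap (c : Fin i ↪ Fin n) (b : Fin n → Bool) (x y : Fin i → Bool) :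
    hammingDist (cubeMap c b x) (cubeMap c b y) = hammingDist x y := by
  have : ({j | cubeMap c b x j ≠ cubeMap c b y j} : Finset (Fin n)) =
      ({k | x k ≠ y k} : Finset (Fin i)).map c := by
    ext j
    by_cases hj : ∃ k, c k = j
    · obtain ⟨k, rfl⟩ := hj
      simp [cubeMap_apply_embedding]
    · rw [not_exists] at hj
      simp [cubeMap_apply_of_notMem hj, hj]
  rw [hammingDist, this, Finset.card_map, hammingDist]

noncomputable def cubeEmbedding (c : Fin i ↪ Fin n) (b : Fin n → Bool) :
    hypercube i ↪g hypercube n where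
  toFun := cubeMap c b
  inj' x y h := by
    simpa using (hammingDist_cubeMap c b x y).symm.trans (hammingDist_eq_zero.2 h)
  map_rel_iff' {x y} := by
    change (hypercube n).Adj (cubeMap c b x) (cubeMap c b y) ↔ _
    rw [hypercube_adj_iff_hammingDist, hypercube_adj_iff_hammingDist, hammingDist_cubeMap]

theorem range_cubeMap (c : Fin i ↪ Fin n) (b : Fin n → Bool) :
    Set.range (cubeMap c b) = subcube (Finset.univ.map c) b := by
  ext v
  constructor
  · rintro ⟨x, rfl⟩ j hj
    exact cubeMap_apply_of_notMem (by simpa using hj) b x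
  · intro hv
    refine ⟨fun k => xor (b (c k)) (v (c k)), funext fun j => ?_⟩
    by_cases hj : ∃ k, c k = j
    · obtain ⟨k, rfl⟩ := hj
      simp [cubeMap_apply_embedding]
    · rw [not_exists] at hj
      rw [cubeMap_apply_of_notMem hj, hv j (by simpa using hj)]

theorem eq_or_eq_of_adj_flipAt_of_adj_flipAt {y z : Fin n → Bool} {p q : Fin n} (hpq : p ≠ q)
    (hp : (hypercube n).Adj y (flipAt z p)) (hq : (hypercube n).Adj y (flipAt z q)) :
    y = z ∨ y = flipAt (flipAt z p) q := by
  obtain ⟨r, hr⟩ := hypercube_adj_iff.1 hp.symm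
  obtain ⟨s, hs⟩ := hypercube_adj_iff.1 hq.symm
  by_cases hrp : r = p
  · subst hrp
    exact .inl (by simpa using hr)
  · have hsp : s = p := by
      by_contra hsp
      have := congrFun (hr.symm.trans hs) p
      simp [flipAt_apply_of_ne _ (Ne.symm hrp), flipAt_apply_of_ne _ (Ne.symm hsp),
        flipAt_apply_of_ne _ hpq] at this
    exact .inr (by rw [hs, hsp, flipAt_comm])

theorem exists_eq_cubeMap (φ : hypercube i ↪g hypercube n) :
    ∃ c : Fin i ↪ Fin n, ⇑φ = cubeMap c (φ fun _ => false) := by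
  set z : Fin i → Bool := fun _ => false
  have hdir : ∀ k, ∃ j, φ (flipAt z k) = flipAt (φ z) j := fun k =>
    hypercube_adj_iff.1 (φ.map_adj_iff.2 (hypercube_adj_flipAt z k))
  choose c hc using hdir
  have c_inj : Function.Injective c := fun k l h =>
    flipAt_injective z (φ.injective ((hc k).trans (h ▸ (hc l).symm)))
  set c' : Fin i ↪ Fin n := ⟨c, c_inj⟩
  have hdist : ∀ {y : Fin i → Bool} {l}, y l = true →
      hammingDist (flipAt y l) z < hammingDist y z := fun {y l} hl => by
    have := hammingDist_flipAt_add_one (x := y) (y := z) (j := l) (by simp [z, hl])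
    omega
  refine ⟨c', funext fun x => ?_⟩
  induction hd : hammingDist x z using Nat.strong_induction_on generalizing x with
  | _ d ih =>
  by_cases hx : ∃ k, x k = true
  swap
  · obtain rfl : x = z := funext fun k => by simpa using not_exists.1 hx k
    rw [cubeMap_false]
  obtain ⟨k, hk⟩ := hx
  have ih' : ∀ y, hammingDist y z < d → φ y = cubeMap c' (φ z) y := fun y hy => ih _ hy y rfl
  by_cases hl : ∃ l, l ≠ k ∧ x l = true
  · obtain ⟨l, hlk, hl⟩ := hl
    have hkl : (flipAt x k) l = true := by rw [flipAt_apply_of_ne _ hlk, hl]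
    have h1 := ih' _ (hd ▸ hdist hk)
    have h2 := ih' _ (hd ▸ hdist hl)
    have h3 := ih' _ (hd ▸ (hdist hkl).trans (hdist hk))
    rw [cubeMap_flipAt] at h1 h2
    rw [cubeMap_flipAt, cubeMap_flipAt] at h3
    -- `φ x` is a common neighbour of `φ (x - e_k)` and `φ (x - e_l)`; besides the expected
    -- image of `x`, the only other one is `φ (x - e_k - e_l)`, which injectivity rules out.
    rcases eq_or_eq_of_adj_flipAt_of_adj_flipAt (c_inj.ne hlk.symm)
      (h1 ▸ φ.map_adj_iff.2 (hypercube_adj_flipAt x k))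
      (h2 ▸ φ.map_adj_iff.2 (hypercube_adj_flipAt x l)) with h | h
    · exact h
    · refine absurd (φ.injective (h.trans h3.symm)) fun hx => ?_
      simpa [flipAt_apply_of_ne _ hlk.symm] using congrFun hx k
  · obtain rfl : x = flipAt z k := funext fun l => by
      by_cases hlk : l = k
      · subst hlk
        simpa [z] using hk
      · simpa [flipAt_apply_of_ne _ hlk, z] using fun h => hl ⟨l, hlk, h⟩
    rw [hc k, cubeMap_flipAt, cubeMap_false]
    rfl

theorem subcube_congr {A : Finset (Fin n)} {b b' : Fin n → Bool} (h : ∀ j ∉ A, b j = b' j) :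
    subcube A b = subcube A b' := by
  ext v
  exact forall₂_congr fun j hj => by rw [h j hj]

theorem subset_of_subcube_eq {A A' : Finset (Fin n)} {b b' : Fin n → Bool}
    (h : subcube A b = subcube A' b') : A ⊆ A' := by
  intro j hj
  by_contra hj'
  have hb : b ∈ subcube A' b' := h ▸ fun _ _ => rfl
  have hflip : flipAt b j ∈ subcube A' b' :=
    h ▸ fun k hk => flipAt_apply_of_ne _ (ne_of_mem_of_not_mem hj hk).symm
  simpa [← hb j hj'] using hflip j hj'

theorem exists_range_eq_subcube (φ : hypercube i ↪g hypercube n) :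
    ∃ A b, A.card = i ∧ (∀ j ∈ A, b j = false) ∧ Set.range φ = subcube A b := by
  obtain ⟨c, hc⟩ := exists_eq_cubeMap φ
  generalize φ (fun _ => false) = b at hc
  refine ⟨Finset.univ.map c, fun j => if j ∈ Finset.univ.map c then false else b j,
    by simp, fun j hj => if_pos hj, ?_⟩
  rw [hc, range_cubeMap]
  exact subcube_congr fun j hj => (if_neg hj).symm

theorem range_range_hypercube_embedding :
    Set.range (fun φ : hypercube i ↪g hypercube n => Set.range φ) =
      (fun p : (_ : Finset (Fin n)) × (Fin n → Bool) => subcube p.1 p.2) ''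
        ↑((Finset.univ.powersetCard i).sigma
          fun A => {b : Fin n → Bool | ∀ j ∈ A, b j = false}) := by
  ext s
  simp only [Set.mem_range, Set.mem_image, Finset.mem_coe, Finset.mem_sigma,
    Finset.mem_powersetCard, Finset.subset_univ, Finset.mem_filter, Finset.mem_univ, true_and,
    Sigma.exists]
  constructor
  · rintro ⟨φ, rfl⟩
    obtain ⟨A, b, hA, hb, h⟩ := exists_range_eq_subcube φ
    exact ⟨A, b, ⟨hA, hb⟩, h.symm⟩
  · rintro ⟨A, b, ⟨hA, -⟩, rfl⟩
    refine ⟨cubeEmbedding (A.orderEmbOfFin hA).toEmbedding b, ?_⟩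
    exact (range_cubeMap _ b).trans (by simp)

theorem subcube_injOn :
    Set.InjOn (fun p : (_ : Finset (Fin n)) × (Fin n → Bool) => subcube p.1 p.2)
      {p | ∀ j ∈ p.1, p.2 j = false} := by
  rintro ⟨A, b⟩ (hb : ∀ j ∈ A, b j = false) ⟨A', b'⟩ (hb' : ∀ j ∈ A', b' j = false)
    (h : subcube A b = subcube A' b')
  obtain rfl : A = A' := (subset_of_subcube_eq h).antisymm (subset_of_subcube_eq h.symm)
  have hb_mem : b ∈ subcube A b' := h ▸ fun _ _ => rfl
  obtain rfl : b = b' := funext fun j => by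
    by_cases hj : j ∈ A
    · rw [hb j hj, hb' j hj]
    · exact hb_mem j hj
  rfl

theorem card_filter_forall_mem_eq_false (A : Finset (Fin n)) :
    (Finset.univ.filter fun b : Fin n → Bool => ∀ j ∈ A, b j = false).card =
      2 ^ (n - A.card) := by
  have : ({b : Fin n → Bool | ∀ j ∈ A, b j = false} : Finset _) =
      Fintype.piFinset fun j => if j ∈ A then {false} else Finset.univ := by
    ext b
    simp only [Finset.mem_filter, Finset.mem_univ, true_and, Fintype.mem_piFinset]
    exact forall_congr' fun j => by split_ifs <;> simp [*]
  rw [this, Fintype.card_piFinset]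
  simp [apply_ite Finset.card, Finset.prod_ite, Finset.filter_notMem_eq_sdiff,
    Finset.card_sdiff_of_subset (Finset.subset_univ A)]

theorem cubeCount_hypercube (n i : ℕ) :
    cubeCount (hypercube n) i = n.choose i * 2 ^ (n - i) := by
  rw [cubeCount_eq_ncard, range_range_hypercube_embedding,
    Set.InjOn.ncard_image (subcube_injOn.mono fun p hp => by simp_all), Set.ncard_coe_finset,
    Finset.card_sigma, Finset.sum_congr rfl fun A hA => by
      rw [card_filter_forall_mem_eq_false, (Finset.mem_powersetCard.1 hA).2],
    Finset.sum_const, Finset.card_powersetCard, Finset.card_univ, Fintype.card_fin, smul_eq_mul]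

end Subcubes

namespace withPendants

variable {V : Type*} {G : SimpleGraph V} {m : ℕ} {f : Fin m → V}

def inlEmbedding (G : SimpleGraph V) (m : ℕ) (f : Fin m → V) : G ↪g withPendants G m f where
  toEmbedding := Function.Embedding.inl
  map_rel_iff' := Iff.rfl

theorem adj_inr_iff {j : Fin m} {y : V ⊕ Fin m} :
    (withPendants G m f).Adj (.inr j) y ↔ y = .inl (f j) := by
  cases y <;> simp [withPendants, eq_comm]

theorem exists_walk_to_base (x : V ⊕ Fin m) :
    ∃ p : (withPendants G m f).Walk x (.inl (Sum.elim id f x)), p.length = x.isRight.toNat := by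
  rcases x with v | j
  · exact ⟨.nil, rfl⟩
  · exact ⟨.cons (adj_inr_iff.2 rfl) .nil, rfl⟩

theorem exists_walk [DecidableEq V] (hG : G.Connected) (x y : V ⊕ Fin m) :
    ∃ p : (withPendants G m f).Walk x y, p.length = if x = y then 0 else
      G.dist (Sum.elim id f x) (Sum.elim id f y) + x.isRight.toNat + y.isRight.toNat := by
  by_cases hxy : x = y
  · subst hxy
    exact ⟨.nil, by simp⟩
  obtain ⟨p, hp⟩ := exists_walk_to_base (f := f) x
  obtain ⟨q, hq⟩ := hG.exists_walk_length_eq_dist (Sum.elim id f x) (Sum.elim id f y)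
  obtain ⟨r, hr⟩ := exists_walk_to_base (f := f) y
  obtain ⟨q', hq'⟩ : ∃ q' : (withPendants G m f).Walk (.inl (Sum.elim id f x))
      (.inl (Sum.elim id f y)), q'.length = G.dist (Sum.elim id f x) (Sum.elim id f y) :=
    ⟨q.map (inlEmbedding G m f).toHom, (Walk.length_map _ _).trans hq⟩
  refine ⟨p.append (q'.append r.reverse), ?_⟩
  simp only [Walk.length_append, Walk.length_reverse, hp, hq', hr, if_neg hxy]
  ring

theorem connected (hG : G.Connected) : (withPendants G m f).Connected := by
  classical
  have : Nonempty V := hG.nonempty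
  exact .mk fun x y => ⟨(exists_walk hG x y).choose⟩

theorem dist_eq [DecidableEq V] (hG : G.Connected) (x y : V ⊕ Fin m) :
    (withPendants G m f).dist x y = if x = y then 0 else
      G.dist (Sum.elim id f x) (Sum.elim id f y) + x.isRight.toNat + y.isRight.toNat := by
  refine dist_eq_of_triangle (D := fun x y => if x = y then 0 else
      G.dist (Sum.elim id f x) (Sum.elim id f y) + x.isRight.toNat + y.isRight.toNat)
    (fun x => if_pos rfl) (fun x y z => ?_) (fun x y h => ?_)
    (exists_walk hG) x y
  · have := hG.dist_triangle (u := Sum.elim id f x) (v := Sum.elim id f y)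
      (w := Sum.elim id f z)
    by_cases hxz : x = z
    · simp [hxz]
    by_cases hxy : x = y
    · simp [hxy]
    by_cases hyz : y = z
    · simp [hyz]
    simp only [hxz, hxy, hyz, if_false]
    omega
  · rcases x with u | j <;> rcases y with v | k
    · simpa [h.ne] using (dist_eq_one_iff_adj.2 (show G.Adj u v from h)).le
    · obtain rfl : u = f k := h
      simp
    · obtain rfl : f j = v := h
      simp
    · exact h.elim

theorem dist_inl_right (hG : G.Connected) (a : V ⊕ Fin m) (t : V) :
    (withPendants G m f).dist a (.inl t) = G.dist (Sum.elim id f a) t + a.isRight.toNat := by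
  classical
  rw [dist_eq hG]
  split_ifs with h <;> simp [h]

theorem dist_inl_left (hG : G.Connected) (a : V ⊕ Fin m) (t : V) :
    (withPendants G m f).dist (.inl t) a = G.dist t (Sum.elim id f a) + a.isRight.toNat := by
  rw [dist_comm, dist_inl_right hG, dist_comm]

theorem inl_mem_interval_iff (hG : G.Connected) {a b : V ⊕ Fin m} (hab : a ≠ b) {t : V} :
    .inl t ∈ (withPendants G m f).interval a b ↔
      t ∈ G.interval (Sum.elim id f a) (Sum.elim id f b) := by
  classical
  rw [mem_interval, mem_interval, dist_inl_right hG, dist_inl_left hG, dist_eq hG, if_neg hab]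
  omega

theorem eq_or_eq_of_inr_mem_interval (hG : G.Connected) {a b : V ⊕ Fin m} {j : Fin m}
    (h : .inr j ∈ (withPendants G m f).interval a b) : .inr j = a ∨ .inr j = b := by
  classical
  by_contra! hj
  have := hG.dist_triangle (u := Sum.elim id f a) (v := f j) (w := Sum.elim id f b)
  rw [mem_interval, dist_eq hG, dist_eq hG, dist_eq hG, if_neg hj.1.symm, if_neg hj.2] at h
  simp only [Sum.elim_inr, Sum.isRight_inr, Bool.toNat_true] at h
  split_ifs at h <;> omega

end withPendants

theorem IsMedianGraph.withPendants {V : Type*} {G : SimpleGraph V} (hG : IsMedianGraph G)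
    (m : ℕ) (f : Fin m → V) : IsMedianGraph (withPendants G m f) := by
  refine isMedianGraph_of_pairwise_ne (withPendants.connected hG.1) fun u v w huv huw hvw => ?_
  obtain ⟨t, ht, huniq⟩ :=
    (isMedianGraph_iff.1 hG).2 (Sum.elim id f u) (Sum.elim id f v) (Sum.elim id f w)
  simp only [← withPendants.inl_mem_interval_iff hG.1 huv,
    ← withPendants.inl_mem_interval_iff hG.1 huw, ← withPendants.inl_mem_interval_iff hG.1 hvw]
    at ht huniq
  refine ⟨.inl t, ht, ?_⟩
  rintro (t' | j) ⟨hj_uv, hj_uw, hj_vw⟩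
  · exact congrArg Sum.inl (huniq t' ⟨hj_uv, hj_uw, hj_vw⟩)
  · rcases withPendants.eq_or_eq_of_inr_mem_interval hG.1 hj_uv with rfl | rfl <;>
      rcases withPendants.eq_or_eq_of_inr_mem_interval hG.1 hj_uw with h | h <;>
      rcases withPendants.eq_or_eq_of_inr_mem_interval hG.1 hj_vw with h' | h' <;> simp_all

namespace withPendants

variable {V : Type*} {G : SimpleGraph V} {m : ℕ} {f : Fin m → V}

def pendantCubes (f : Fin m → V) : ℕ → Set (Set (V ⊕ Fin m))
  | 0 => Set.range fun j => {.inr j}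
  | 1 => Set.range fun j => {.inl (f j), .inr j}
  | _ => ∅

theorem ncard_pendantCubes (f : Fin m → V) (i : ℕ) :
    (pendantCubes f i).ncard = if i ≤ 1 then m else 0 := by
  match i with
  | 0 =>
    rw [pendantCubes, Set.ncard_range_of_injective fun j k h => Sum.inr_injective
      (Set.singleton_injective h), Nat.card_eq_fintype_card, Fintype.card_fin]
    rfl
  | 1 =>
    have hinj : Function.Injective fun j => ({.inl (f j), .inr j} : Set (V ⊕ Fin m)) :=
      fun j k h => by simpa using congrArg (Sum.inr j ∈ ·) h
    rw [pendantCubes, Set.ncard_range_of_injective hinj, Nat.card_eq_fintype_card,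
      Fintype.card_fin]
    rfl
  | i + 2 => simp [pendantCubes]

theorem exists_inr_mem_of_mem_pendantCubes {i : ℕ} {s : Set (V ⊕ Fin m)}
    (hs : s ∈ pendantCubes f i) : ∃ j, .inr j ∈ s := by
  match i, hs with
  | 0, ⟨j, hj⟩ => exact ⟨j, hj ▸ rfl⟩
  | 1, ⟨j, hj⟩ => exact ⟨j, hj ▸ .inr rfl⟩

theorem exists_embedding_of_mem_pendantCubes {i : ℕ} {s : Set (V ⊕ Fin m)}
    (hs : s ∈ pendantCubes f i) :
    ∃ φ : hypercube i ↪g withPendants G m f, Set.range φ = s := by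
  match i, hs with
  | 0, ⟨j, hj⟩ =>
    refine ⟨⟨⟨fun _ => .inr j, fun x y _ => Subsingleton.elim x y⟩, fun {x y} => ?_⟩,
      ?_⟩
    · exact iff_of_false (withPendants G m f).irrefl fun h => h.ne (Subsingleton.elim x y)
    · rw [← hj]
      exact Set.range_const
  | 1, ⟨j, hj⟩ =>
    refine ⟨⟨⟨fun x => if x 0 then .inr j else .inl (f j), fun x y h => ?_⟩,
      fun {x y} => ?_⟩, ?_⟩
    · refine funext (Fin.forall_fin_one.2 ?_)
      cases hx : x 0 <;> cases hy : y 0 <;> simp_all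
    · change (withPendants G m f).Adj (if x 0 then .inr j else .inl (f j))
        (if y 0 then .inr j else .inl (f j)) ↔ _
      rw [hypercube_one_adj_iff]
      cases x 0 <;> cases y 0 <;> simp [withPendants]
    · rw [← hj]
      ext y
      simp only [Set.mem_range, Set.mem_insert_iff, Set.mem_singleton_iff]
      constructor
      · rintro ⟨x, rfl⟩
        change (if x 0 then _ else _) = _ ∨ (if x 0 then _ else _) = _
        cases x 0 <;> simp
      · rintro (rfl | rfl)
        exacts [⟨fun _ => false, rfl⟩, ⟨fun _ => true, rfl⟩]

variable {i : ℕ}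

theorem range_mem_pendantCubes (φ : hypercube i ↪g withPendants G m f) {j : Fin m}
    (hj : .inr j ∈ Set.range φ) : Set.range φ ∈ pendantCubes f i := by
  obtain ⟨x₀, hx₀⟩ := hj
  have hnbr : ∀ x, (hypercube i).Adj x₀ x → φ x = .inl (f j) := fun x hx =>
    adj_inr_iff.1 (hx₀ ▸ φ.map_adj_iff.2 hx)
  have hi : i ≤ 1 := by
    by_contra! hi
    have h01 : (⟨0, by omega⟩ : Fin i) ≠ ⟨1, hi⟩ := by simp
    exact h01 (flipAt_injective x₀ (φ.injective ((hnbr _ (hypercube_adj_flipAt x₀ _)).trans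
      (hnbr _ (hypercube_adj_flipAt x₀ _)).symm)))
  obtain rfl | rfl : i = 0 ∨ i = 1 := by omega
  · refine ⟨j, ?_⟩
    change {Sum.inr j} = _
    rw [← hx₀, Set.range_unique]
    exact congrArg (fun x => {φ x}) (Subsingleton.elim _ _)
  · refine ⟨j, Set.ext fun y => ⟨?_, ?_⟩⟩
    · rintro (rfl | rfl)
      exacts [⟨_, hnbr _ (hypercube_adj_flipAt x₀ 0)⟩, ⟨x₀, hx₀⟩]
    · rintro ⟨x, rfl⟩
      rcases eq_or_hypercube_one_adj x x₀ with rfl | hx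
      · exact .inr hx₀
      · exact .inl (hnbr x hx)

theorem exists_range_eq_image_inl (φ : hypercube i ↪g withPendants G m f)
    (h : ∀ j, .inr j ∉ Set.range φ) :
    ∃ ψ : hypercube i ↪g G, Set.range φ = Sum.inl '' Set.range ψ := by
  have hφ : ∀ x, .inl (Sum.elim id f (φ x)) = φ x := fun x => by
    cases hx : φ x with
    | inl v => rfl
    | inr j => exact absurd ⟨x, hx⟩ (h j)
  let ψ : hypercube i ↪g G :=
    { toFun x := Sum.elim id f (φ x)
      inj' x y hxy := φ.injective (by rw [← hφ x, ← hφ y]; exact congrArg _ hxy)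
      map_rel_iff' {x y} := by
        change (withPendants G m f).Adj (.inl (Sum.elim id f (φ x)))
          (.inl (Sum.elim id f (φ y))) ↔ _
        rw [hφ, hφ, φ.map_adj_iff] }
  refine ⟨ψ, ?_⟩
  rw [← Set.range_comp]
  exact congrArg Set.range (funext fun x => (hφ x).symm)

theorem range_range_embedding :
    Set.range (fun φ : hypercube i ↪g withPendants G m f => Set.range φ) =
      Set.image Sum.inl '' Set.range (fun ψ : hypercube i ↪g G => Set.range ψ) ∪
        pendantCubes f i := by
  ext s
  constructor
  · rintro ⟨φ, rfl⟩
    by_cases h : ∃ j, .inr j ∈ Set.range φ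
    · obtain ⟨j, hj⟩ := h
      exact .inr (range_mem_pendantCubes φ hj)
    · obtain ⟨ψ, hψ⟩ := exists_range_eq_image_inl φ (not_exists.1 h)
      exact .inl ⟨_, ⟨ψ, rfl⟩, hψ.symm⟩
  · rintro (⟨_, ⟨ψ, rfl⟩, rfl⟩ | hs)
    · exact ⟨(inlEmbedding G m f).comp ψ, Set.range_comp (inlEmbedding G m f) ψ⟩
    · exact exists_embedding_of_mem_pendantCubes hs

theorem cubeCount_eq [Finite V] (G : SimpleGraph V) (f : Fin m → V) (i : ℕ) :
    cubeCount (withPendants G m f) i = cubeCount G i + if i ≤ 1 then m else 0 := by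
  have hdisj : Disjoint
      (Set.image Sum.inl '' Set.range (fun ψ : hypercube i ↪g G => Set.range ψ))
      (pendantCubes f i) := Set.disjoint_left.2 fun s ⟨t, _, hts⟩ hs => by
    obtain ⟨j, hj⟩ := exists_inr_mem_of_mem_pendantCubes hs
    simp [← hts] at hj
  rw [cubeCount_eq_ncard, cubeCount_eq_ncard, range_range_embedding, Set.ncard_union_eq hdisj,
    Set.ncard_image_of_injective _ (Set.image_injective.2 Sum.inl_injective), ncard_pendantCubes]

end withPendants

theorem not_polyUnimodal_of_lt_of_lt {P : Polynomial ℕ} {k : ℕ}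
    (h₁ : P.coeff (k + 1) < P.coeff k) (h₂ : P.coeff (k + 1) < P.coeff (k + 2)) :
    ¬ PolyUnimodal P := by
  rintro ⟨M, hup, hdown⟩
  by_cases hk : k < M
  · exact (hup k hk).not_gt h₁
  · exact (hdown (k + 1) (by omega)).not_gt h₂

theorem Nat.choose_two_eq_of_five_le {n : ℕ} (hn : 5 ≤ n) :
    n.choose 2 = (n ^ 2 - 5 * n) / 2 + 2 * n := by
  have h5 : 5 * n ≤ n * n := Nat.mul_le_mul_right n hn
  have : n * (n - 1) = (n ^ 2 - 5 * n) + 2 * (2 * n) := by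
    rw [Nat.mul_sub_one, sq]
    omega
  rw [Nat.choose_two_right, this, Nat.add_mul_div_left _ _ two_pos]

theorem Nat.choose_two_mul_two_pow_lt {n : ℕ} (hn : 9 ≤ n) :
    n.choose 2 * 2 ^ (n - 2) < n.choose 3 * 2 ^ (n - 3) := by
  have h3 : n.choose 3 * 3 = n.choose 2 * (n - 2) := Nat.choose_succ_right_eq n 2
  have hpos : 0 < n.choose 2 := Nat.choose_pos (by omega)
  have hlt : 2 * n.choose 2 < n.choose 3 := by
    have : n.choose 2 * 7 ≤ n.choose 2 * (n - 2) := Nat.mul_le_mul_left _ (by omega)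
    omega
  have hpow : 2 ^ (n - 2) = 2 * 2 ^ (n - 3) := by
    rw [← pow_succ']
    congr 1
    omega
  rw [hpow, ← mul_assoc, mul_comm _ 2]
  exact Nat.mul_lt_mul_of_pos_right hlt (by positivity)

section PendantHypercube

variable {n m : ℕ} (f : Fin m → (Fin n → Bool))

theorem coeff_cubePoly_withPendants_hypercube (k : ℕ) :
    (cubePoly (withPendants (hypercube n) m f)).coeff k =
      n.choose k * 2 ^ (n - k) + if k ≤ 1 then m else 0 := by
  rw [coeff_cubePoly, withPendants.cubeCount_eq, cubeCount_hypercube]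

theorem cubePoly_withPendants_hypercube :
    cubePoly (withPendants (hypercube n) m f) = (X + C 2) ^ n + C (m : ℕ) * (X + 1) := by
  ext k
  rw [coeff_cubePoly_withPendants_hypercube, coeff_add, coeff_X_add_C_pow, coeff_C_mul,
    coeff_add, coeff_X, coeff_one]
  rcases k with _ | _ | k <;> simp [mul_comm]

theorem not_polyUnimodal_cubePoly_withPendants_hypercube (hn : 9 ≤ n)
    (hm : ((n ^ 2 - 5 * n) / 2) * 2 ^ (n - 2) + 1 ≤ m) :
    ¬ PolyUnimodal (cubePoly (withPendants (hypercube n) m f)) := by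
  refine not_polyUnimodal_of_lt_of_lt (k := 1) ?_ ?_ <;>
    simp only [coeff_cubePoly_withPendants_hypercube, Nat.reduceAdd, Nat.reduceLeDiff, if_true,
      if_false, add_zero, Nat.choose_one_right]
  · have hpow : 2 ^ (n - 1) = 2 * 2 ^ (n - 2) := by
      rw [← pow_succ']
      congr 1
      omega
    rw [Nat.choose_two_eq_of_five_le (by omega), hpow]
    linarith
  · exact Nat.choose_two_mul_two_pow_lt hn

end PendantHypercube

theorem cubePoly_hypercube_withPendants_general (n m : ℕ)
    (f : Fin m → (Fin n → Bool)) :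
    IsMedianGraph (withPendants (hypercube n) m f) ∧
    cubePoly (withPendants (hypercube n) m f) =
      (Polynomial.X + Polynomial.C 2) ^ n + Polynomial.C m * (Polynomial.X + 1) ∧
    (9 ≤ n → ((n ^ 2 - 5 * n) / 2) * 2 ^ (n - 2) + 1 ≤ m →
      ¬ PolyUnimodal (cubePoly (withPendants (hypercube n) m f))) :=
  ⟨isMedianGraph_hypercube.withPendants m f, cubePoly_withPendants_hypercube f,
    not_polyUnimodal_cubePoly_withPendants_hypercube f⟩

/-- For `n ≥ 1`, the graph `G` obtained from the hypercube `Q_n` by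
attaching `m` pendant vertices is a median graph with `C(G,x) = (x+2)^n + m·(x+1)`;
moreover if `n ≥ 9` and `m ≥ ((n² − 5n)/2)·2^(n−2) + 1`, then `C(G,x)` is not unimodal
(hence cube polynomials of median graphs need not be unimodal). -/
theorem cubePoly_hypercube_withPendants (n m : ℕ) (hn : 1 ≤ n)
    (f : Fin m → (Fin n → Bool)) :
    IsMedianGraph (withPendants (hypercube n) m f) ∧
    cubePoly (withPendants (hypercube n) m f) =
      (Polynomial.X + Polynomial.C 2) ^ n + Polynomial.C m * (Polynomial.X + 1) ∧
    (9 ≤ n → ((n ^ 2 - 5 * n) / 2) * 2 ^ (n - 2) + 1 ≤ m →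
      ¬ PolyUnimodal (cubePoly (withPendants (hypercube n) m f))) :=
  cubePoly_hypercube_withPendants_general n m f
end
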